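/- If two distinct letters a and b occur in a double occurrence word in the Reidemeister II pattern u·a·b·v·b·a·w and a, b are assigned opposite signs in {+1, -1}, then deleting both occurrences of a and b does not change the odd writhe of the word, i.e., the sum of signs over letters of odd Gaussian parity is the same before and after deletion. -/

import Mathlib

/-- The list of positions at which the letter `c` occurs in the word `w`. -/
def occs {α : Type*} [DecidableEq α] (w : List α) (c : α) : List ℕ :=
  (List.range w.length).filter (fun i => w[i]? = some c)

/-- The Gaussian parity of the letter `c` in a double occurrence word `w`:
if `c` occurs at positions `i < j`, it is `(j - i - 1) % 2`. -/
def gaussParity {α : Type*} [DecidableEq α] (w : List α) (c : α) : ℕ :=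
  match occs w c with
  | [i, j] => (j - i - 1) % 2
  | _ => 0

/-- The number of occurrences of `b` strictly between the two occurrences of `c`. -/
def betweenCount {α : Type*} [DecidableEq α] (w : List α) (c b : α) : ℕ :=
  match occs w c with
  | [i, j] => ((occs w b).filter (fun k => i < k ∧ k < j)).length
  | _ => 0

/-- `b` is interleaved with `c` if exactly one occurrence of `b` lies strictly
between the two occurrences of `c`. -/
def Interleaved {α : Type*} [DecidableEq α] (w : List α) (b c : α) : Prop :=
  betweenCount w c b = 1

instance {α : Type*} [DecidableEq α] (w : List α) (b c : α) :
    Decidable (Interleaved w b c) := by unfold Interleaved; infer_instance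

/-- A double occurrence word: every occurring letter occurs exactly twice. -/
def IsDOW {α : Type*} [DecidableEq α] (w : List α) : Prop :=
  ∀ c ∈ w, w.count c = 2

/-- The odd writhe of a signed double occurrence word: the sum of the signs of
the letters of odd Gaussian parity. -/
def oddWrithe {α : Type*} [DecidableEq α] (w : List α) (sign : α → ℤ) : ℤ :=
  ((w.dedup.filter (fun c => gaussParity w c = 1)).map sign).sum

/-!
A letter `c` other than `a`, `b` keeps its Gaussian parity: deleting a block of even length not
containing `c` shifts the positions of `c` after the block by an even amount, which changes the gap
between the two occurrences of `c` by an even number or not at all. The letters `a` and `b` both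
have parity `|v| mod 2`, so with opposite signs they contribute nothing to the odd writhe.
-/

section DoubleOccurrenceWord

variable {α : Type*} [DecidableEq α]

theorem occs_append (s t : List α) (c : α) :
    occs (s ++ t) c = occs s c ++ (occs t c).map (s.length + ·) := by
  unfold occs
  rw [List.length_append, List.range_add, List.filter_append, List.filter_map]
  congr 1
  · refine List.filter_congr fun i hi => ?_
    rw [List.getElem?_append_left (List.mem_range.mp hi)]
  · refine congrArg _ (List.filter_congr fun i _ => ?_)
    simp only [Function.comp_apply]
    rw [List.getElem?_append_right (Nat.le_add_right _ _), Nat.add_sub_cancel_left]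

theorem occs_cons (d : α) (t : List α) (c : α) :
    occs (d :: t) c = (if d = c then [0] else []) ++ (occs t c).map (1 + ·) := by
  rw [← List.singleton_append, occs_append]
  by_cases h : d = c <;> simp [occs, h]

theorem length_occs (w : List α) (c : α) : (occs w c).length = w.count c := by
  induction w with
  | nil => rfl
  | cons d t ih => by_cases h : d = c <;> simp [occs_cons, h, ih]

theorem occs_eq_nil_iff {w : List α} {c : α} : occs w c = [] ↔ c ∉ w := by
  rw [← List.length_eq_zero_iff, length_occs, List.count_eq_zero]

theorem lt_length_of_mem_occs {w : List α} {c : α} {k : ℕ} (h : k ∈ occs w c) :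
    k < w.length :=
  List.mem_range.mp (List.mem_filter.mp h).1

theorem occs_append_append_of_notMem (s : List α) {p : List α} (t : List α) {c : α}
    (hc : c ∉ p) :
    occs (s ++ p ++ t) c = occs s c ++ (occs t c).map (s.length + p.length + ·) := by
  rw [occs_append (s ++ p), occs_append s p, occs_eq_nil_iff.mpr hc, List.map_nil,
    List.append_nil, List.length_append]

theorem gaussParity_append_append_of_notMem (s : List α) {p : List α} (t : List α) {c : α}
    (hc : c ∉ p) (hp : Even p.length) :
    gaussParity (s ++ p ++ t) c = gaussParity (s ++ t) c := by
  have hs : ∀ i ∈ occs s c, i < s.length := fun i hi => lt_length_of_mem_occs hi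
  unfold gaussParity
  rw [occs_append_append_of_notMem s t hc, occs_append]
  obtain ⟨m, hm⟩ := hp
  generalize occs s c = L at hs ⊢
  generalize occs t c = L'
  rcases L with _ | ⟨i, _ | ⟨j, _ | ⟨k, L⟩⟩⟩ <;>
    rcases L' with _ | ⟨i', _ | ⟨j', _ | ⟨k', L'⟩⟩⟩ <;> simp_all <;> omega

theorem gaussParity_append_cons_append_cons {s t r : List α} {c : α}
    (hs : c ∉ s) (ht : c ∉ t) (hr : c ∉ r) :
    gaussParity (s ++ c :: t ++ c :: r) c = t.length % 2 := by
  have hocc : occs (s ++ c :: t ++ c :: r) c = [s.length, s.length + t.length + 1] := by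
    simp [occs_append, occs_cons, occs_eq_nil_iff.mpr, hs, ht, hr]
    omega
  simp only [gaussParity, hocc]
  omega

theorem IsDOW.notMem_of_append_cons_append_cons {s t r : List α} {c : α}
    (hw : IsDOW (s ++ c :: t ++ c :: r)) : c ∉ s ∧ c ∉ t ∧ c ∉ r := by
  have h2 := hw c (by simp)
  simp only [List.count_append, List.count_cons_self] at h2
  simp only [← List.count_eq_zero]
  omega

theorem oddWrithe_eq_sum (w : List α) (sign : α → ℤ) :
    oddWrithe w sign = ∑ c ∈ w.toFinset, if gaussParity w c = 1 then sign c else 0 := by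
  rw [oddWrithe, ← List.sum_toFinset _ (w.nodup_dedup.filter _), ← Finset.sum_filter]
  congr 1
  ext c
  simp

theorem oddWrithe_eq_of_cancelling_pair {w w' : List α} {a b : α} (sign : α → ℤ)
    (hset : w.toFinset = insert a (insert b w'.toFinset)) (hab : a ≠ b) (ha : a ∉ w')
    (hb : b ∉ w') (hpar : ∀ c ∈ w', gaussParity w c = gaussParity w' c)
    (hpar_ab : gaussParity w a = gaussParity w b) (hopp : sign a = -sign b) :
    oddWrithe w sign = oddWrithe w' sign := by
  rw [oddWrithe_eq_sum, oddWrithe_eq_sum, hset, Finset.sum_insert (by simp [hab, ha]),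
    Finset.sum_insert (by simpa using hb),
    Finset.sum_congr rfl fun c hc => by rw [hpar c (List.mem_toFinset.mp hc)], hpar_ab, hopp]
  split_ifs <;> ring

theorem gaussParity_reidemeisterII_of_ne (u v x : List α) {a b c : α} (hca : c ≠ a)
    (hcb : c ≠ b) :
    gaussParity (u ++ a :: b :: v ++ b :: a :: x) c = gaussParity (u ++ v ++ x) c :=
  calc gaussParity (u ++ a :: b :: v ++ b :: a :: x) c
      = gaussParity (u ++ [a, b] ++ (v ++ [b, a] ++ x)) c := by simp
    _ = gaussParity (u ++ v ++ [b, a] ++ x) c := by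
      rw [gaussParity_append_append_of_notMem _ _ (by simp [hca, hcb]) even_two]
      simp
    _ = gaussParity (u ++ v ++ x) c :=
      gaussParity_append_append_of_notMem _ _ (by simp [hca, hcb]) even_two

end DoubleOccurrenceWord

theorem reidemeisterII_oddWrithe_invariant_general {α : Type*} [DecidableEq α]
    (u v x : List α) (a b : α) (sign : α → ℤ) (hab : a ≠ b)
    (hopp : sign a = -sign b)
    (hw : IsDOW (u ++ a :: b :: v ++ b :: a :: x)) :
    oddWrithe (u ++ a :: b :: v ++ b :: a :: x) sign =
      oddWrithe (u ++ v ++ x) sign := by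
  have hw_a : u ++ a :: b :: v ++ b :: a :: x = u ++ a :: (b :: v ++ [b]) ++ a :: x := by simp
  have hw_b : u ++ a :: b :: v ++ b :: a :: x = u ++ [a] ++ b :: v ++ b :: a :: x := by simp
  obtain ⟨hau, havb, hax⟩ := (hw_a ▸ hw).notMem_of_append_cons_append_cons
  obtain ⟨hbua, hbv, hbax⟩ := (hw_b ▸ hw).notMem_of_append_cons_append_cons
  have hpar_a : gaussParity (u ++ a :: b :: v ++ b :: a :: x) a = v.length % 2 := by
    rw [hw_a, gaussParity_append_cons_append_cons hau havb hax]
    simp only [List.length_append, List.length_cons, List.length_nil]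
    omega
  have hpar_b : gaussParity (u ++ a :: b :: v ++ b :: a :: x) b = v.length % 2 := by
    rw [hw_b, gaussParity_append_cons_append_cons hbua hbv hbax]
  refine oddWrithe_eq_of_cancelling_pair sign ?_ hab (by simp_all) (by simp_all)
    (fun c hc => gaussParity_reidemeisterII_of_ne u v x ?_ ?_) (hpar_a.trans hpar_b.symm) hopp
  · ext c
    simp only [List.mem_toFinset, Finset.mem_insert, List.mem_append, List.mem_cons]
    tauto
  · rintro rfl
    simp_all
  · rintro rfl
    simp_all

/-- Deleting the two letters of a Reidemeister II pattern u·a·b·v·b·a·w with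
opposite signs preserves the odd writhe. -/
theorem reidemeisterII_oddWrithe_invariant {α : Type*} [DecidableEq α]
    (u v x : List α) (a b : α) (sign : α → ℤ) (hab : a ≠ b)
    (hsgn : ∀ c, sign c = 1 ∨ sign c = -1) (hopp : sign a = -sign b)
    (hw : IsDOW (u ++ a :: b :: v ++ b :: a :: x)) :
    oddWrithe (u ++ a :: b :: v ++ b :: a :: x) sign =
      oddWrithe (u ++ v ++ x) sign :=
  reidemeisterII_oddWrithe_invariant_general u v x a b sign hab hopp hw
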